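/- Let n ≥ 1 and let a binary sequence of length M contain exactly K ones and M − K zeros, with K < M, all cyclic rotations equally likely. Define Ā(t) = t − (number of ones among the first t entries). If (M − K)/M ≤ c − ε for some c ∈ (0,1) and ε > 0, then the probability that Ā(t) < c·t for all t = 1,...,M is at least ε·M/((c)·M) ≥ ε/c > 0; in particular, with c = (1 − p̂) + 2ε', (M−K)/M ≤ (1−p̂) + ε', the probability is at least ε'/((1 − p̂) + 2ε'). -/

import Mathlib

open scoped Classical

/-!
Put `S u = ∑_{s < u} (1 - x s - c)`: its steps are `≥ -c`, it drops by `D = cM - (M - K) ≥ εM`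
per period, and the shifts `j` counted by `N` are exactly the strict future maxima of `S`.
The running maximum `m j = max_{t ≥ j} S t` decreases only at such points, and there by at most
one step, i.e. by at most `c`. Over one period `m` loses `D`, so `D ≤ c N`.
-/

open Finset

theorem Function.Periodic.sum_range_add {α : Type*} [AddCommMonoid α] {f : ℕ → α} {M : ℕ}
    (hf : Function.Periodic f M) (t : ℕ) :
    ∑ s ∈ range (t + M), f s = ∑ s ∈ range t, f s + ∑ s ∈ range M, f s := by
  rw [add_comm t, Finset.sum_range_add, add_comm]
  exact congrArg (· + _) (sum_congr rfl fun s _ => by rw [add_comm, hf])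

namespace CyclicBallot

variable {S : ℕ → ℝ} {M : ℕ} {D c : ℝ}

/-- Because `S` drifts down by `D ≥ 0` per period, this is `max_{t ≥ j} S t`. -/
noncomputable def futureMax (S : ℕ → ℝ) (M j : ℕ) : ℝ :=
  (range (M + 1)).sup' nonempty_range_add_one fun i => S (j + i)

theorem futureMax_add_period (hper : ∀ t, S (t + M) = S t - D) (j : ℕ) :
    futureMax S M (j + M) = futureMax S M j - D := by
  simp only [futureMax, sub_eq_add_neg, sup'_add, add_right_comm j M, hper]

theorem le_futureMax {i : ℕ} (hi : i ≤ M) (j : ℕ) : S (j + i) ≤ futureMax S M j :=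
  le_sup' (fun i => S (j + i)) (mem_range_succ_iff.mpr hi)

theorem futureMax_eq_max (hM : 0 < M) (hper : ∀ t, S (t + M) = S t - D) (hD : 0 ≤ D) (j : ℕ) :
    futureMax S M j = max (S j) (futureMax S M (j + 1)) := by
  apply le_antisymm
  · refine sup'_le _ _ fun i hi => ?_
    rcases i with _ | i
    · exact le_max_left _ _
    · rw [← add_assoc, add_right_comm]
      exact (le_futureMax (by simp at hi; omega) _).trans (le_max_right _ _)
  · refine max_le (le_futureMax (Nat.zero_le M) j) (sup'_le _ _ fun i hi => ?_)
    rcases (mem_range_succ_iff.mp hi).lt_or_eq with hi | hi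
    · rw [add_assoc, add_comm 1]
      exact le_futureMax hi _
    · rw [hi, hper]
      linarith [le_futureMax (S := S) hM j]

theorem forall_lt_iff_futureMax_lt (hM : 0 < M) (hper : ∀ t, S (t + M) = S t - D)
    (hD : 0 ≤ D) (j : ℕ) :
    (∀ t ∈ Icc 1 M, S (j + t) < S j) ↔ futureMax S M (j + 1) < S j := by
  simp only [futureMax, sup'_lt_iff, mem_range_succ_iff, mem_Icc]
  constructor
  · intro h i hi
    rcases hi.lt_or_eq with hi | hi
    · simpa [add_assoc, add_comm 1] using h (i + 1) ⟨by omega, hi⟩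
    · rw [hi, hper]
      linarith [h 1 ⟨le_rfl, hM⟩]
  · rintro h t ⟨ht1, htM⟩
    simpa [add_assoc, Nat.add_sub_cancel' ht1] using h (t - 1) (by omega)

theorem futureMax_sub_succ_le (hM : 0 < M) (hper : ∀ t, S (t + M) = S t - D) (hD : 0 ≤ D)
    (hstep : ∀ j, S j - c ≤ S (j + 1)) (j : ℕ) :
    futureMax S M j - futureMax S M (j + 1) ≤ if futureMax S M (j + 1) < S j then c else 0 := by
  rw [futureMax_eq_max hM hper hD]
  split_ifs with h
  · rw [max_eq_left h.le]
    linarith [hstep j, le_futureMax (S := S) (Nat.zero_le M) (j + 1)]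
  · rw [max_eq_right (not_lt.mp h), sub_self]

theorem drop_le_mul_card_ballot_shifts (hM : 0 < M) (hper : ∀ t, S (t + M) = S t - D)
    (hD : 0 ≤ D) (hstep : ∀ j, S j - c ≤ S (j + 1)) :
    D ≤ c * #{j ∈ range M | ∀ t ∈ Icc 1 M, S (j + t) < S j} := by
  calc D = ∑ j ∈ range M, (futureMax S M j - futureMax S M (j + 1)) := by
        have hperiod := futureMax_add_period hper 0
        rw [zero_add] at hperiod
        rw [sum_range_sub', hperiod]
        ring
    _ ≤ ∑ j ∈ range M, if futureMax S M (j + 1) < S j then c else 0 :=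
        sum_le_sum fun j _ => futureMax_sub_succ_le hM hper hD hstep j
    _ = c * #{j ∈ range M | ∀ t ∈ Icc 1 M, S (j + t) < S j} := by
        simp_rw [← sum_filter, sum_const, nsmul_eq_mul, forall_lt_iff_futureMax_lt hM hper hD]
        ring

theorem neg_sum_le_mul_card_ballot_shifts {f : ℕ → ℝ} (hM : 0 < M)
    (hf : Function.Periodic f M) (hstep : ∀ j, -c ≤ f j)
    (hdrift : ∑ s ∈ range M, f s ≤ 0) :
    -∑ s ∈ range M, f s ≤
      c * #{j ∈ range M | ∀ t ∈ Icc 1 M, ∑ s ∈ Ico j (j + t), f s < 0} := by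
  have hbound := drop_le_mul_card_ballot_shifts (S := fun u => ∑ s ∈ range u, f s) (c := c) hM
    (fun t => by rw [hf.sum_range_add]; ring) (neg_nonneg.mpr hdrift)
    (fun j => by rw [sum_range_succ]; linarith [hstep j])
  convert hbound using 4
  ext j
  simp only [mem_filter, sum_Ico_eq_sub _ (Nat.le_add_right _ _), sub_neg]

end CyclicBallot

theorem ballot_application_general (M K : ℕ) (hM : 1 ≤ M)
    (x : ℕ → ℕ) (hx01 : ∀ j, x j = 0 ∨ x j = 1)
    (hper : ∀ j, x (j + M) = x j)
    (hsum : ∑ j ∈ Finset.range M, x j = K)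
    (c ε : ℝ) (hc : 0 < c) (hε : 0 < ε)
    (hslope : ((M : ℝ) - K) / M ≤ c - ε)
    (N : ℕ)
    (hN : N = Finset.card ((Finset.range M).filter (fun j =>
      ∀ t ∈ Finset.Icc 1 M,
        ((t : ℝ) - ∑ s ∈ Finset.Ico j (j + t), (x s : ℝ)) < c * t))) :
    ε / c ≤ (N : ℝ) / M ∧ 0 < (N : ℝ) / M := by
  have hwindow : ∀ j t, ∑ s ∈ Ico j (j + t), (1 - x s - c : ℝ) =
      t - ∑ s ∈ Ico j (j + t), (x s : ℝ) - c * t := by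
    intro j t
    simp only [sum_sub_distrib, sum_const, Nat.card_Ico, Nat.add_sub_cancel_left, nsmul_eq_mul]
    ring
  have hstep : ∀ j, -c ≤ 1 - x j - c := fun j => by
    rcases hx01 j with h | h <;> simp [h]
  have hdrift : ∑ s ∈ range M, (1 - x s - c : ℝ) = -(c * M - (M - K)) := by
    simp only [sum_sub_distrib, sum_const, card_range, nsmul_eq_mul, ← Nat.cast_sum, hsum]
    ring
  have hMpos : (0 : ℝ) < M := by exact_mod_cast hM
  have hdrop : ε * M ≤ c * M - (M - K) := by
    have := (div_le_iff₀ hMpos).mp hslope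
    linarith
  have hbound := CyclicBallot.neg_sum_le_mul_card_ballot_shifts hM
    (fun j => by simp [hper]) hstep (by rw [hdrift]; nlinarith)
  simp only [hwindow, hdrift, neg_neg, sub_neg] at hbound
  replace hbound : c * M - (M - K) ≤ c * N := by
    convert hbound using 4
    rw [hN]
    congr!
  have hmain : ε / c ≤ (N : ℝ) / M := by
    rw [div_le_div_iff₀ hc hMpos]
    linarith
  exact ⟨hmain, (div_pos hε hc).trans_le hmain⟩

/-- Application of the cyclic Ballot Theorem: for a binary sequence of length
`M` with exactly `K` ones (extended periodically) and a uniformly random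
cyclic shift, if the zero-density `(M-K)/M ≤ c - ε`, then the fraction of
shifts `j` for which the failure count `Ā(t) = t - (ones among first t)` stays
strictly below `c·t` for all `t = 1,…,M` is at least `ε/c > 0`. -/
theorem ballot_application (M K : ℕ) (hM : 1 ≤ M) (hK : K < M)
    (x : ℕ → ℕ) (hx01 : ∀ j, x j = 0 ∨ x j = 1)
    (hper : ∀ j, x (j + M) = x j)
    (hsum : ∑ j ∈ Finset.range M, x j = K)
    (c ε : ℝ) (hc : 0 < c) (hc1 : c < 1) (hε : 0 < ε)
    (hslope : ((M : ℝ) - K) / M ≤ c - ε)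
    (N : ℕ)
    (hN : N = Finset.card ((Finset.range M).filter (fun j =>
      ∀ t ∈ Finset.Icc 1 M,
        ((t : ℝ) - ∑ s ∈ Finset.Ico j (j + t), (x s : ℝ)) < c * t))) :
    ε / c ≤ (N : ℝ) / M ∧ 0 < (N : ℝ) / M :=
  ballot_application_general M K hM x hx01 hper hsum c ε hc hε hslope N hN
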